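/- arXiv:2504.20795 — 2 statements merged into one kernel-verified Lean document; each statement's English description precedes it below -/
import Mathlib

section
/- Let I be a finite index set with |I| = d, and let p : I → ℝ with 0 ≤ p(i) ≤ 1 for all i. If r ∈ [0,1] satisfies p(i) ≤ r for every i ∈ I, then for every integer k with 0 ≤ k ≤ d, P_I(count ≥ k) ≤ Σ_{j=k}^{d} C(d, j) · r^j · (1 − r)^{d−j}, where C(d, j) is the binomial coefficient. (The upper bound of Equation (7): the binomial tail at the maximum incident edge probability upper-bounds the k-probability.) -/
open Finset

/-- Possible-world weight: the probability that exactly the indices in `S` occur. -/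
noncomputable def pbWeight {α : Type*} [DecidableEq α] (I : Finset α) (p : α → ℝ)
    (S : Finset α) : ℝ :=
  (∏ i ∈ S, p i) * ∏ i ∈ I \ S, (1 - p i)

/-- Poisson binomial tail probability `P_I(count ≥ k)`. -/
noncomputable def pbTail {α : Type*} [DecidableEq α] (I : Finset α) (p : α → ℝ)
    (k : ℕ) : ℝ :=
  ∑ S ∈ I.powerset.filter (fun S => k ≤ S.card), pbWeight I p S

lemma pbWeight_nonneg {α : Type*} [DecidableEq α] (I : Finset α) (p : α → ℝ)
    (hp : ∀ i ∈ I, 0 ≤ p i ∧ p i ≤ 1) {S : Finset α} (hS : S ⊆ I) :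
    0 ≤ pbWeight I p S := by
  apply mul_nonneg
  · exact Finset.prod_nonneg fun i hi => (hp i (hS hi)).1
  · exact Finset.prod_nonneg fun i hi => by
      have := (hp i (Finset.mem_sdiff.mp hi).1).2; linarith

lemma pbTail_anti {α : Type*} [DecidableEq α] (I : Finset α) (p : α → ℝ)
    (hp : ∀ i ∈ I, 0 ≤ p i ∧ p i ≤ 1) {k l : ℕ} (hkl : k ≤ l) :
    pbTail I p l ≤ pbTail I p k := by
  apply Finset.sum_le_sum_of_subset_of_nonneg
  · intro S hS
    rw [Finset.mem_filter] at hS ⊢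
    exact ⟨hS.1, le_trans hkl hS.2⟩
  · intro S hS _
    exact pbWeight_nonneg I p hp (Finset.mem_powerset.mp (Finset.mem_filter.mp hS).1)

lemma pbTail_zero {α : Type*} [DecidableEq α] (I : Finset α) (p : α → ℝ) :
    pbTail I p 0 = 1 := by
  unfold pbTail
  rw [Finset.filter_true_of_mem (fun S _ => Nat.zero_le _)]
  have := Finset.prod_add (fun i => p i) (fun i => 1 - p i) I
  simp only [pbWeight]
  rw [← this]
  simp

lemma pbTail_succ_insert {α : Type*} [DecidableEq α] (s : Finset α) (p : α → ℝ)
    {a : α} (ha : a ∉ s) (k : ℕ) :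
    pbTail (insert a s) p (k + 1)
      = p a * pbTail s p k + (1 - p a) * pbTail s p (k + 1) := by
  have hsum : ∀ (I : Finset α) (m : ℕ), pbTail I p m
      = ∑ S ∈ I.powerset, if m ≤ S.card then pbWeight I p S else 0 := by
    intro I m; rw [pbTail, Finset.sum_filter]
  rw [hsum, Finset.sum_powerset_insert ha, hsum, hsum, Finset.mul_sum, Finset.mul_sum,
    ← Finset.sum_add_distrib, ← Finset.sum_add_distrib]
  apply Finset.sum_congr rfl
  intro T hT
  have hTs : T ⊆ s := Finset.mem_powerset.mp hT
  have haT : a ∉ T := fun h => ha (hTs h)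
  have h1 : pbWeight (insert a s) p T = (1 - p a) * pbWeight s p T := by
    unfold pbWeight
    rw [Finset.insert_sdiff_of_notMem _ haT, Finset.prod_insert (by
      simp [Finset.mem_sdiff, ha])]
    ring
  have h2 : pbWeight (insert a s) p (insert a T) = p a * pbWeight s p T := by
    unfold pbWeight
    have : insert a s \ insert a T = s \ T := by
      ext x
      simp only [Finset.mem_sdiff, Finset.mem_insert, not_or]
      constructor
      · rintro ⟨hx, hxa, hxT⟩
        rcases hx with rfl | hx
        · exact absurd rfl hxa
        · exact ⟨hx, hxT⟩
      · rintro ⟨hx, hxT⟩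
        exact ⟨Or.inr hx, fun h => ha (h ▸ hx), hxT⟩
    rw [this, Finset.prod_insert haT]
    ring
  rw [h1, h2, Finset.card_insert_of_notMem haT]
  split_ifs <;> first | ring1 | (exfalso; omega)

lemma pbTail_mono {α : Type*} [DecidableEq α] (s : Finset α) :
    ∀ (p q : α → ℝ), (∀ i ∈ s, 0 ≤ p i ∧ p i ≤ 1) → (∀ i ∈ s, 0 ≤ q i ∧ q i ≤ 1) →
    (∀ i ∈ s, p i ≤ q i) → ∀ k, pbTail s p k ≤ pbTail s q k := by
  induction s using Finset.induction_on with
  | empty =>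
    intro p q _ _ _ k
    simp only [pbTail, pbWeight, Finset.powerset_empty]
    apply le_of_eq
    apply Finset.sum_congr rfl
    intro x hx
    rw [Finset.mem_filter, Finset.mem_singleton] at hx
    simp [hx.1]
  | @insert a s ha ih =>
    intro p q hp hq hpq k
    have hps : ∀ i ∈ s, 0 ≤ p i ∧ p i ≤ 1 := fun i hi => hp i (Finset.mem_insert_of_mem hi)
    have hqs : ∀ i ∈ s, 0 ≤ q i ∧ q i ≤ 1 := fun i hi => hq i (Finset.mem_insert_of_mem hi)
    have hpqs : ∀ i ∈ s, p i ≤ q i := fun i hi => hpq i (Finset.mem_insert_of_mem hi)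
    cases k with
    | zero => rw [pbTail_zero, pbTail_zero]
    | succ k =>
      rw [pbTail_succ_insert s p ha k, pbTail_succ_insert s q ha k]
      have hpa := hp a (Finset.mem_insert_self a s)
      have hqa := hq a (Finset.mem_insert_self a s)
      have hpqa := hpq a (Finset.mem_insert_self a s)
      have h1 := ih p q hps hqs hpqs k
      have h2 := ih p q hps hqs hpqs (k + 1)
      have h3 : pbTail s q (k + 1) ≤ pbTail s q k := pbTail_anti s q hqs (Nat.le_succ k)
      nlinarith [h1, h2, h3, hpa.1, hpa.2, hqa.1, hqa.2, hpqa]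

lemma pbTail_const {α : Type*} [DecidableEq α] (I : Finset α) (r : ℝ) (k : ℕ) :
    pbTail I (fun _ => r) k
      = ∑ j ∈ Finset.Icc k I.card, (I.card.choose j : ℝ) * r ^ j * (1 - r) ^ (I.card - j) := by
  unfold pbTail
  have hset : I.powerset.filter (fun S => k ≤ S.card)
      = (Finset.Icc k I.card).biUnion (fun j => I.powersetCard j) := by
    ext S
    simp only [Finset.mem_filter, Finset.mem_powerset, Finset.mem_biUnion, Finset.mem_Icc,
      Finset.mem_powersetCard]
    constructor
    · rintro ⟨hS, hk⟩
      exact ⟨S.card, ⟨hk, Finset.card_le_card hS⟩, hS, rfl⟩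
    · rintro ⟨j, ⟨hkj, _⟩, hS, rfl⟩
      exact ⟨hS, hkj⟩
  rw [hset, Finset.sum_biUnion]
  · apply Finset.sum_congr rfl
    intro j hj
    have hinner : ∀ S ∈ I.powersetCard j,
        pbWeight I (fun _ => r) S = r ^ j * (1 - r) ^ (I.card - j) := by
      intro S hS
      obtain ⟨hSI, hcard⟩ := Finset.mem_powersetCard.mp hS
      unfold pbWeight
      rw [Finset.prod_const, Finset.prod_const, hcard, Finset.card_sdiff_of_subset hSI, hcard]
    rw [Finset.sum_congr rfl hinner, Finset.sum_const, Finset.card_powersetCard,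
      nsmul_eq_mul]
    ring
  · intro x hx y hy hxy
    apply Finset.disjoint_left.mpr
    intro S hSx hSy
    exact hxy (((Finset.mem_powersetCard.mp hSx).2.symm.trans
      (Finset.mem_powersetCard.mp hSy).2))

/-- The binomial-tail upper bound of Equation (7): the binomial tail at the maximum
incident edge probability upper-bounds the `k`-probability. -/
theorem pbTail_le_binomial_tail {α : Type*} [DecidableEq α] (I : Finset α) (p : α → ℝ)
    (hp : ∀ i ∈ I, 0 ≤ p i ∧ p i ≤ 1) (d : ℕ) (hd : I.card = d)
    (r : ℝ) (hr0 : 0 ≤ r) (hr1 : r ≤ 1) (hrle : ∀ i ∈ I, p i ≤ r)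
    (k : ℕ) (hk : k ≤ d) :
    pbTail I p k ≤ ∑ j ∈ Finset.Icc k d, (d.choose j : ℝ) * r ^ j * (1 - r) ^ (d - j) := by
  have h1 : pbTail I p k ≤ pbTail I (fun _ => r) k :=
    pbTail_mono I p (fun _ => r) hp (fun i _ => ⟨hr0, hr1⟩) hrle k
  calc pbTail I p k ≤ pbTail I (fun _ => r) k := h1
    _ = _ := by rw [pbTail_const, hd]
end

section
/- Let G = (V, E, p) be an uncertain graph, k an integer, and η a real number. If vertex sets C₁ ⊆ V and C₂ ⊆ V both satisfy the (k, η)-constraint, then C₁ ∪ C₂ also satisfies the (k, η)-constraint. Consequently there exists a unique maximal vertex set satisfying the (k, η)-constraint, namely the union of all vertex sets satisfying it, and it contains every vertex set satisfying the constraint. -/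
/-!
The `k`-probability of `u` in `G[C]` is the probability that at least `k` of the independent
edges from `u` into `C` exist. Conditioning on one extra edge shows that this probability can
only grow when `C` grows, so a vertex keeping its `k`-probability in `C₁` keeps it in `C₁ ∪ C₂`.
The constrained sets of the finite lattice of vertex sets are thus closed under union and contain
`∅`, so their union is the greatest one.
-/

open Finset

/-- The `k`-probability of a vertex `u` in the subgraph of `G` induced by the vertex set
`C`: the probability that `u` has at least `k` neighbors within `C`, where each edge
`uv` exists independently with probability `p u v`. -/
noncomputable def kProb {V : Type*} [Fintype V] [DecidableEq V] (G : SimpleGraph V)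
    [DecidableRel G.Adj] (p : V → V → ℝ) (k : ℕ) (C : Finset V) (u : V) : ℝ :=
  ∑ T ∈ ((C.filter (fun v => G.Adj u v)).powerset).filter (fun T => k ≤ T.card),
    (∏ v ∈ T, p u v) * ∏ v ∈ (C.filter (fun v => G.Adj u v)) \ T, (1 - p u v)

lemma SupClosed.existsUnique_isGreatest {α : Type*} [SemilatticeSup α] [Finite α] {s : Set α}
    (hs : SupClosed s) (hne : s.Nonempty) : ∃! M, IsGreatest s M := by
  set t := s.toFinite.toFinset
  have ht : t.Nonempty := by simpa [t] using hne
  have hM : IsGreatest s (t.sup' ht id) :=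
    ⟨hs.finsetSup'_mem ht fun _ hi => by simpa [t] using hi,
      fun _ hC => le_sup' id (by simpa [t] using hC)⟩
  exact ⟨_, hM, fun _ hN => hN.unique hM⟩

section

variable {α : Type*} [DecidableEq α]

/-- The probability that at least `k` of independent events indexed by `s` occur, where event
`v` has probability `q v`. -/
noncomputable def probAtLeast (q : α → ℝ) (k : ℕ) (s : Finset α) : ℝ :=
  ∑ T ∈ s.powerset.filter (fun T => k ≤ T.card), (∏ v ∈ T, q v) * ∏ v ∈ s \ T, (1 - q v)

variable {q : α → ℝ} {s : Finset α}

lemma probAtLeast_zero (q : α → ℝ) (s : Finset α) : probAtLeast q 0 s = 1 := by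
  simp [probAtLeast, ← prod_add]

/-- Condition on whether the event `a` occurs. -/
lemma probAtLeast_succ_insert (q : α → ℝ) (k : ℕ) {a : α} (ha : a ∉ s) :
    probAtLeast q (k + 1) (insert a s) =
      q a * probAtLeast q k s + (1 - q a) * probAtLeast q (k + 1) s := by
  simp only [probAtLeast, sum_filter, sum_powerset_insert ha, mul_sum, ← sum_add_distrib]
  refine sum_congr rfl fun T hT => ?_
  have haT : a ∉ T := fun h => ha (mem_powerset.mp hT h)
  rw [insert_sdiff_of_notMem _ haT, insert_sdiff_insert, sdiff_insert_of_notMem ha,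
    prod_insert (fun h => ha (mem_sdiff.mp h).1), prod_insert haT, card_insert_of_notMem haT]
  split_ifs <;> first | omega | ring

lemma prod_mul_prod_one_sub_nonneg (hq : ∀ v ∈ s, 0 ≤ q v ∧ q v ≤ 1) {T : Finset α}
    (hT : T ⊆ s) : 0 ≤ (∏ v ∈ T, q v) * ∏ v ∈ s \ T, (1 - q v) :=
  mul_nonneg (prod_nonneg fun v hv => (hq v (hT hv)).1)
    (prod_nonneg fun v hv => sub_nonneg.mpr (hq v (mem_sdiff.mp hv).1).2)

lemma probAtLeast_succ_le (hq : ∀ v ∈ s, 0 ≤ q v ∧ q v ≤ 1) (k : ℕ) :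
    probAtLeast q (k + 1) s ≤ probAtLeast q k s :=
  sum_le_sum_of_subset_of_nonneg (monotone_filter_right _ fun _ h => by omega)
    fun _ hT _ => prod_mul_prod_one_sub_nonneg hq (mem_powerset.mp (mem_filter.mp hT).1)

lemma probAtLeast_le_insert {a : α} (hq : ∀ v ∈ insert a s, 0 ≤ q v ∧ q v ≤ 1) (k : ℕ) :
    probAtLeast q k s ≤ probAtLeast q k (insert a s) := by
  by_cases ha : a ∈ s
  · rw [insert_eq_of_mem ha]
  cases k with
  | zero => rw [probAtLeast_zero, probAtLeast_zero]
  | succ k =>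
    rw [probAtLeast_succ_insert q k ha]
    have hle := probAtLeast_succ_le (fun v hv => hq v (mem_insert_of_mem hv)) k
    have hqa := hq a (mem_insert_self a s)
    nlinarith

lemma probAtLeast_le_union (r : Finset α) (hq : ∀ v ∈ s ∪ r, 0 ≤ q v ∧ q v ≤ 1) (k : ℕ) :
    probAtLeast q k s ≤ probAtLeast q k (s ∪ r) := by
  induction r using Finset.induction_on with
  | empty => rw [union_empty]
  | insert a r _ ih =>
    rw [union_insert] at hq ⊢
    exact (ih fun v hv => hq v (mem_insert_of_mem hv)).trans (probAtLeast_le_insert hq k)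

lemma probAtLeast_mono {t : Finset α} (hst : s ⊆ t) (hq : ∀ v ∈ t, 0 ≤ q v ∧ q v ≤ 1)
    (k : ℕ) : probAtLeast q k s ≤ probAtLeast q k t := by
  rw [← union_sdiff_of_subset hst] at hq ⊢
  exact probAtLeast_le_union _ hq k

end

lemma kProb_mono {V : Type*} [Fintype V] [DecidableEq V] {G : SimpleGraph V} [DecidableRel G.Adj]
    {p : V → V → ℝ} (hp : ∀ u v, G.Adj u v → 0 ≤ p u v ∧ p u v ≤ 1) (k : ℕ) {C D : Finset V}
    (hCD : C ⊆ D) (u : V) : kProb G p k C u ≤ kProb G p k D u :=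
  probAtLeast_mono (filter_subset_filter _ hCD) (fun v hv => hp u v (mem_filter.mp hv).2) k

lemma supClosed_setOf_le_kProb {V : Type*} [Fintype V] [DecidableEq V] {G : SimpleGraph V}
    [DecidableRel G.Adj] {p : V → V → ℝ} (hp : ∀ u v, G.Adj u v → 0 ≤ p u v ∧ p u v ≤ 1)
    (k : ℕ) (η : ℝ) : SupClosed {C : Finset V | ∀ u ∈ C, η ≤ kProb G p k C u} :=
  fun A hA B hB u hu => by
    rcases mem_union.mp hu with hu | hu
    · exact (hA u hu).trans (kProb_mono hp k subset_union_left u)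
    · exact (hB u hu).trans (kProb_mono hp k subset_union_right u)

theorem core_constraint_union_and_unique_maximal_general {V : Type*} [Fintype V] [DecidableEq V]
    (G : SimpleGraph V) [DecidableRel G.Adj] (p : V → V → ℝ)
    (hp : ∀ u v, G.Adj u v → 0 ≤ p u v ∧ p u v ≤ 1)
    (k : ℕ) (η : ℝ) (C₁ C₂ : Finset V)
    (h₁ : ∀ u ∈ C₁, η ≤ kProb G p k C₁ u) (h₂ : ∀ u ∈ C₂, η ≤ kProb G p k C₂ u) :
    (∀ u ∈ C₁ ∪ C₂, η ≤ kProb G p k (C₁ ∪ C₂) u) ∧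
      ∃! M : Finset V, (∀ u ∈ M, η ≤ kProb G p k M u) ∧
        ∀ C : Finset V, (∀ u ∈ C, η ≤ kProb G p k C u) → C ⊆ M := by
  have hS := supClosed_setOf_le_kProb hp k η
  exact ⟨hS h₁ h₂, hS.existsUnique_isGreatest ⟨∅, by simp⟩⟩

/-- The family of vertex sets satisfying the `(k, η)`-constraint is closed under
unions; consequently there is a unique maximal vertex set satisfying the constraint,
which contains every vertex set satisfying it. -/
theorem core_constraint_union_and_unique_maximal {V : Type*} [Fintype V] [DecidableEq V]
    (G : SimpleGraph V) [DecidableRel G.Adj] (p : V → V → ℝ)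
    (hsymm : ∀ u v, p u v = p v u) (hp : ∀ u v, G.Adj u v → 0 ≤ p u v ∧ p u v ≤ 1)
    (k : ℕ) (η : ℝ) (C₁ C₂ : Finset V)
    (h₁ : ∀ u ∈ C₁, η ≤ kProb G p k C₁ u) (h₂ : ∀ u ∈ C₂, η ≤ kProb G p k C₂ u) :
    (∀ u ∈ C₁ ∪ C₂, η ≤ kProb G p k (C₁ ∪ C₂) u) ∧
      ∃! M : Finset V, (∀ u ∈ M, η ≤ kProb G p k M u) ∧
        ∀ C : Finset V, (∀ u ∈ C, η ≤ kProb G p k C u) → C ⊆ M :=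
  core_constraint_union_and_unique_maximal_general G p hp k η C₁ C₂ h₁ h₂
end
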